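/- Suppose G_c = (N, E_c) is a CG of Q^{V^π} for every joint policy π of a finite Markov game, and assume the singleton-argmax assumption holds. Let {π^k} be a sequence of deterministic action-dependent policies generated by Algorithm AD-MPI, associated with an ADG G_d = (N, E_d). If N_d(i) = N_c(i^{[+]}) for every i ∈ N, then {π^k} converges in finitely many terms to a globally optimal policy: there exist K ∈ ℕ and a deterministic action-dependent policy π° with π^k_i = π°_i for all i ∈ N and k ≥ K, and V^{π°} = V^*. -/

import Mathlib

/-- `N_c(S)`: the set of neighbors of a set `S` of vertices in an undirected graph,
excluding `S` itself. -/
def ncSet {n : ℕ} (Gc : SimpleGraph (Fin n)) (S : Set (Fin n)) : Set (Fin n) :=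
  (⋃ j ∈ S, Gc.neighborSet j) \ S

/-- `G_c` is a coordination graph (CG) of `Q : S × A → ℝ`: there is a family of local
value functions `q i j`, one for each edge `(i,j) ∈ E_c` (with `i < j`, so each
undirected edge is counted once; the family vanishes off the edges), such that
`Q(s,a) = Σ_{(i,j)∈E_c} q i j (s, a_i, a_j)`. -/
def IsCG {n : ℕ} {St : Type*} {A : Fin n → Type*} (Gc : SimpleGraph (Fin n))
    (Q : St → (∀ i, A i) → ℝ) : Prop :=
  ∃ q : (i : Fin n) → (j : Fin n) → St → A i → A j → ℝ,
    (∀ i j, ¬(i < j ∧ Gc.Adj i j) → ∀ s ai aj, q i j s ai aj = 0) ∧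
    ∀ s a, Q s a = ∑ i, ∑ j, q i j s (a i) (a j)

/-- The one-step lookahead value `Q^V(s,a) = r(s,a) + γ Σ_{s'} P(s'|s,a) V(s')`. -/
def QV {n : ℕ} {St : Type*} [Fintype St] {A : Fin n → Type*}
    (P : St → (∀ i, A i) → St → ℝ) (r : St → (∀ i, A i) → ℝ) (γ : ℝ)
    (V : St → ℝ) : St → (∀ i, A i) → ℝ :=
  fun s a => r s a + γ * ∑ s', P s a s' * V s'

/-- The joint action induced by a deterministic action-dependent policy `π`, with the
coordinates in `F` clamped to the values of `a'`: the agents outside `F` evaluate their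
policies in increasing index order (well defined since `Ed j i → j < i`), each `π i`
conditioning on the actions of its in-neighbors `N_d(i) = {j | Ed j i}`. Taking
`F = ∅` yields the induced joint action `ā_π(s)`. -/
def indAct {n : ℕ} {St : Type*} {A : Fin n → Type*}
    (Ed : Fin n → Fin n → Prop) [DecidableRel Ed]
    (hEd : ∀ i j : Fin n, Ed j i → j < i)
    (π : (i : Fin n) → St → ((j : {j : Fin n // Ed j i}) → A j.1) → A i)
    (F : Finset (Fin n)) (a' : ∀ i, A i) (s : St) : (i : Fin n) → A i
  | i =>
    if i ∈ F then a' i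
    else π i s (fun j => indAct Ed hEd π F a' s j.1)
termination_by i => (i : ℕ)
decreasing_by exact hEd i j.1 j.2

/-- The full joint action built from clamped values `c` on `N_d(i)` and a value `ai`
for agent `i` (coordinates outside `N_d[i]` are filled arbitrarily; they are irrelevant
when this vector is used to clamp only the coordinates in `N_d[i]`). -/
noncomputable def cvec {n : ℕ} {A : Fin n → Type*} [∀ i, Nonempty (A i)]
    (Ed : Fin n → Fin n → Prop) [DecidableRel Ed] (i : Fin n)
    (c : (j : {j : Fin n // Ed j i}) → A j.1) (ai : A i) : ∀ j, A j :=
  fun j =>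
    if h : Ed j i then c ⟨j, h⟩
    else if h : j = i then cast (congrArg A h.symm) ai
    else Classical.arbitrary (A j)

/-- `(πseq, Vseq)` is an execution of Algorithm AD-MPI:
* policy evaluation: `Vseq k` is the value function `V^{π^k}`, i.e. the fixed point of
  `T_{π^k} V (s) = Q^V(s, ā_{π^k}(s))`;
* policy iteration: for each agent `i` (in increasing order), `πseq (k+1) i (s, c)`
  maximizes `a_i ↦ Q^{V^{π^k}}(s, c, a_i, ā_{π^{k,i}_{-N_d[i]}}(s, c, a_i))`, where
  `π^{k,i}` uses the already-updated policies `π^{k+1}_j` for `j < i` and `π^k_j`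
  otherwise, and the coordinates in `N_d[i]` are clamped to `(c, a_i)`. -/
noncomputable def ADMPI {n : ℕ} {St : Type*} [Fintype St] {A : Fin n → Type*}
    [∀ i, Fintype (A i)] [∀ i, Nonempty (A i)]
    (P : St → (∀ i, A i) → St → ℝ) (r : St → (∀ i, A i) → ℝ) (γ : ℝ)
    (Ed : Fin n → Fin n → Prop) [DecidableRel Ed]
    (hEd : ∀ i j : Fin n, Ed j i → j < i)
    (πseq : ℕ → (i : Fin n) → St → ((j : {j : Fin n // Ed j i}) → A j.1) → A i)
    (Vseq : ℕ → St → ℝ) : Prop :=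
  (∀ (k : ℕ) (s : St) (a' : ∀ i, A i),
      Vseq k s = QV P r γ (Vseq k) s (indAct Ed hEd (πseq k) ∅ a' s)) ∧
  (∀ (k : ℕ) (i : Fin n) (s : St) (c : (j : {j : Fin n // Ed j i}) → A j.1)
      (ai : A i),
      QV P r γ (Vseq k) s
        (indAct Ed hEd (fun j => if j < i then πseq (k+1) j else πseq k j)
          (Finset.univ.filter fun j => Ed j i ∨ j = i) (cvec Ed i c ai) s)
      ≤ QV P r γ (Vseq k) s
        (indAct Ed hEd (fun j => if j < i then πseq (k+1) j else πseq k j)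
          (Finset.univ.filter fun j => Ed j i ∨ j = i)
          (cvec Ed i c (πseq (k+1) i s c)) s))

/-- The singleton-argmax assumption for Algorithm AD-MPI: for all `k ≥ 1`, `i`, `s`,
and clamped neighbor actions `c`, the set
`argmax_{a_i} Q^{V^{π^k}}(s, c, a_i, ā_{π^{k,i}_{-N_d[i]}}(s, c, a_i))` is a
singleton. -/
noncomputable def SingletonArgmax {n : ℕ} {St : Type*} [Fintype St] {A : Fin n → Type*}
    [∀ i, Fintype (A i)] [∀ i, Nonempty (A i)]
    (P : St → (∀ i, A i) → St → ℝ) (r : St → (∀ i, A i) → ℝ) (γ : ℝ)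
    (Ed : Fin n → Fin n → Prop) [DecidableRel Ed]
    (hEd : ∀ i j : Fin n, Ed j i → j < i)
    (πseq : ℕ → (i : Fin n) → St → ((j : {j : Fin n // Ed j i}) → A j.1) → A i)
    (Vseq : ℕ → St → ℝ) : Prop :=
  ∀ k ≥ 1, ∀ (i : Fin n) (s : St) (c : (j : {j : Fin n // Ed j i}) → A j.1)
    (ai₁ ai₂ : A i),
    (∀ b : A i,
      QV P r γ (Vseq k) s
        (indAct Ed hEd (fun j => if j < i then πseq (k+1) j else πseq k j)
          (Finset.univ.filter fun j => Ed j i ∨ j = i) (cvec Ed i c b) s)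
      ≤ QV P r γ (Vseq k) s
        (indAct Ed hEd (fun j => if j < i then πseq (k+1) j else πseq k j)
          (Finset.univ.filter fun j => Ed j i ∨ j = i) (cvec Ed i c ai₁) s)) →
    (∀ b : A i,
      QV P r γ (Vseq k) s
        (indAct Ed hEd (fun j => if j < i then πseq (k+1) j else πseq k j)
          (Finset.univ.filter fun j => Ed j i ∨ j = i) (cvec Ed i c b) s)
      ≤ QV P r γ (Vseq k) s
        (indAct Ed hEd (fun j => if j < i then πseq (k+1) j else πseq k j)
          (Finset.univ.filter fun j => Ed j i ∨ j = i) (cvec Ed i c ai₂) s)) →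
    ai₁ = ai₂


/-!
AD-MPI is a policy iteration: telescoping over the agents, each sweep can only increase the
one-step lookahead, so the values `V^{π^k}` increase, and since there are finitely many
deterministic policies they are eventually constant.

The condition `N_d(i) = N_c(i^{[+]})` makes every edge of `G_c` lie either below `i` or inside
`N_d(i) ∪ i^{[+]}`. Hence, in the rollout with `N_d[i]` clamped, the effect of agent `i`'s
action on a function with coordination graph `G_c` depends only on the policies of the agents
after `i`. Once the values are constant, a downward induction over the agents with the
singleton-argmax assumption shows that the policies stabilize too, at a policy `π°` that is
strongly person-by-person optimal for `Q^{V^{π°}}`. Switching the agents one at a time from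
`π°` to an arbitrary joint action `a` shows that `Q^{V^{π°}}(s, a)` is maximized by the action
induced by `π°`, so `V^{π°}` solves the Bellman optimality equation and equals `V^*`.
-/

abbrev Policy {n : ℕ} (Ed : Fin n → Fin n → Prop) (St : Type*) (A : Fin n → Type*) :
    Type _ :=
  (i : Fin n) → St → ((j : {j : Fin n // Ed j i}) → A j.1) → A i

def parentsAndSelf {n : ℕ} (Ed : Fin n → Fin n → Prop) [DecidableRel Ed] (i : Fin n) :
    Finset (Fin n) :=
  Finset.univ.filter fun j => Ed j i ∨ j = i

/-- `ā_{μ_{-N_d[i]}}(s, c, b)`: the rollout of `μ` with the parents of `i` clamped to `c`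
and agent `i` clamped to `b`. -/
noncomputable def clampedAct {n : ℕ} {St : Type*} {A : Fin n → Type*} [∀ i, Nonempty (A i)]
    (Ed : Fin n → Fin n → Prop) [DecidableRel Ed] (hEd : ∀ i j : Fin n, Ed j i → j < i)
    (μ : Policy Ed St A) (i : Fin n) (c : (j : {j : Fin n // Ed j i}) → A j.1) (b : A i)
    (s : St) : ∀ j, A j :=
  indAct Ed hEd μ (parentsAndSelf Ed i) (cvec Ed i c b) s

section Splice

variable {n : ℕ} {St : Type*} {A : Fin n → Type*} {Ed : Fin n → Fin n → Prop}

def spliceBelow (m : ℕ) (ν μ : Policy Ed St A) : Policy Ed St A :=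
  fun j => if (j : ℕ) < m then ν j else μ j

theorem spliceBelow_zero (ν μ : Policy Ed St A) : spliceBelow 0 ν μ = μ := by
  funext j
  simp [spliceBelow]

theorem spliceBelow_of_le {m : ℕ} (hm : n ≤ m) (ν μ : Policy Ed St A) :
    spliceBelow m ν μ = ν := by
  funext j
  simp [spliceBelow, j.isLt.trans_le hm]

end Splice

section Rollout

variable {n : ℕ} {St : Type*} {A : Fin n → Type*} {Ed : Fin n → Fin n → Prop}
  [DecidableRel Ed] {hEd : ∀ i j : Fin n, Ed j i → j < i}

theorem mem_parentsAndSelf {i j : Fin n} : j ∈ parentsAndSelf Ed i ↔ Ed j i ∨ j = i := by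
  simp [parentsAndSelf]

theorem indAct_apply (π : Policy Ed St A) (F : Finset (Fin n)) (v : ∀ i, A i) (s : St)
    (i : Fin n) :
    indAct Ed hEd π F v s i =
      if i ∈ F then v i else π i s (fun j => indAct Ed hEd π F v s j.1) := by
  rw [indAct]

theorem indAct_eq_of_forall {π : Policy Ed St A} {F : Finset (Fin n)} {v x : ∀ i, A i}
    {s : St} (hx : ∀ j, x j = if j ∈ F then v j else π j s (fun p => x p.1)) :
    indAct Ed hEd π F v s = x := by
  funext j
  induction j using WellFoundedLT.induction with
  | _ j ih =>
    rw [indAct_apply, hx j]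
    split_ifs
    · rfl
    · congr 1
      funext p
      exact ih p.1 (hEd j p.1 p.2)

theorem indAct_eqOn {μ ν : Policy Ed St A} {F : Finset (Fin n)} {v w : ∀ i, A i} {s : St}
    {S : Set (Fin n)} (hS : ∀ j ∈ S, j ∉ F → ∀ p, Ed p j → p ∈ S)
    (hvw : ∀ j ∈ S, j ∈ F → v j = w j) (hμν : ∀ j ∈ S, j ∉ F → μ j = ν j) :
    ∀ j ∈ S, indAct Ed hEd μ F v s j = indAct Ed hEd ν F w s j := by
  intro j
  induction j using WellFoundedLT.induction with
  | _ j ih =>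
    intro hj
    rw [indAct_apply, indAct_apply]
    by_cases hjF : j ∈ F
    · simp only [if_pos hjF]
      exact hvw j hj hjF
    · simp only [if_neg hjF, hμν j hj hjF]
      congr 1
      funext p
      exact ih p.1 (hEd j p.1 p.2) (hS j hj hjF p.1 p.2)

theorem indAct_eq_of_lt {μ ν : Policy Ed St A} {F : Finset (Fin n)} {v : ∀ i, A i} {s : St}
    {i : Fin n} (hμν : ∀ j < i, μ j = ν j) {j : Fin n} (hj : j < i) :
    indAct Ed hEd μ F v s j = indAct Ed hEd ν F v s j :=
  indAct_eqOn (S := {j | j < i}) (fun j hj _ p hp => (hEd j p hp).trans hj)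
    (fun _ _ _ => rfl) (fun j hj _ => hμν j hj) j hj

theorem indAct_const (a a' : ∀ i, A i) (s : St) :
    indAct Ed hEd (fun j _ _ => a j : Policy Ed St A) ∅ a' s = a :=
  indAct_eq_of_forall fun _ => rfl

variable [∀ i, Nonempty (A i)]

theorem cvec_self (hEd : ∀ i j : Fin n, Ed j i → j < i) (i : Fin n)
    (c : (j : {j : Fin n // Ed j i}) → A j.1) (b : A i) : cvec Ed i c b i = b := by
  have hii : ¬ Ed i i := fun h => (hEd i i h).false
  simp [cvec, hii]

theorem cvec_of_ed {i j : Fin n} (h : Ed j i) (c : (j : {j : Fin n // Ed j i}) → A j.1)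
    (b : A i) : cvec Ed i c b j = c ⟨j, h⟩ := by
  simp [cvec, h]

/-- Replacing agent `i`'s policy amounts to clamping agent `i` (and its parents) in the
rollout of the old policy. -/
theorem indAct_eq_clampedAct {μ ν : Policy Ed St A} {i : Fin n} (hμν : ∀ j ≠ i, μ j = ν j)
    (a' : ∀ i, A i) (s : St) :
    indAct Ed hEd ν ∅ a' s =
      clampedAct Ed hEd μ i (fun p => indAct Ed hEd μ ∅ a' s p.1)
        (ν i s fun p => indAct Ed hEd μ ∅ a' s p.1) s := by
  set x := indAct Ed hEd ν ∅ a' s with hx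
  have hxj : ∀ j, x j = ν j s (fun p => x p.1) := fun j => by
    rw [hx, indAct_apply, if_neg (Finset.notMem_empty j)]
  have hparents : ∀ p : {p // Ed p i}, indAct Ed hEd μ ∅ a' s p.1 = x p.1 := fun p =>
    indAct_eq_of_lt (fun j hj => hμν j hj.ne) (hEd i p.1 p.2)
  simp only [hparents]
  refine (indAct_eq_of_forall fun j => ?_).symm
  rw [hxj]
  by_cases hji : Ed j i
  · rw [if_pos (mem_parentsAndSelf.2 (Or.inl hji)), cvec_of_ed hji, ← hxj]
  by_cases hj : j = i
  · subst hj
    rw [if_pos (mem_parentsAndSelf.2 (Or.inr rfl)), cvec_self hEd]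
  · rw [if_neg (by simp [mem_parentsAndSelf, hji, hj]), hμν j hj]

/-- Telescoping over the agents: `spliceBelow i ν μ` and `spliceBelow (i + 1) ν μ` differ only
in agent `i`. -/
theorem le_indAct_of_forall_clampedAct_le {β : Type*} [Preorder β] (f : (∀ i, A i) → β)
    (μ ν : Policy Ed St A) (a' : ∀ i, A i) (s : St)
    (h : ∀ i : Fin n,
      f (clampedAct Ed hEd (spliceBelow i ν μ) i
          (fun p => indAct Ed hEd (spliceBelow i ν μ) ∅ a' s p.1)
          (μ i s fun p => indAct Ed hEd (spliceBelow i ν μ) ∅ a' s p.1) s) ≤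
        f (clampedAct Ed hEd (spliceBelow i ν μ) i
          (fun p => indAct Ed hEd (spliceBelow i ν μ) ∅ a' s p.1)
          (ν i s fun p => indAct Ed hEd (spliceBelow i ν μ) ∅ a' s p.1) s)) :
    f (indAct Ed hEd μ ∅ a' s) ≤ f (indAct Ed hEd ν ∅ a' s) := by
  have hmono : Monotone fun m => f (indAct Ed hEd (spliceBelow m ν μ) ∅ a' s) := by
    refine monotone_nat_of_le_succ fun m => ?_
    rcases lt_or_ge m n with hm | hm
    · let i : Fin n := ⟨m, hm⟩
      have hoff : ∀ j ≠ i, spliceBelow m ν μ j = spliceBelow (m + 1) ν μ j := by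
        intro j hj
        have hjm : (j : ℕ) ≠ m := fun h => hj (Fin.ext h)
        simp only [spliceBelow, Nat.lt_succ_iff_lt_or_eq, hjm, or_false]
      have hcur : spliceBelow m ν μ i = μ i := by simp [spliceBelow, i]
      have hnext : spliceBelow (m + 1) ν μ i = ν i := by simp [spliceBelow, i]
      have hself := indAct_eq_clampedAct (hEd := hEd) (μ := spliceBelow m ν μ)
        (fun j (_ : j ≠ i) => rfl) a' s
      have hswitch := indAct_eq_clampedAct (hEd := hEd) hoff a' s
      rw [hcur] at hself
      rw [hnext] at hswitch
      rw [hswitch]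
      conv_lhs => rw [hself]
      exact h i
    · simp only [spliceBelow_of_le hm, spliceBelow_of_le (hm.trans m.le_succ), le_refl]
  simpa only [spliceBelow_zero, spliceBelow_of_le le_rfl] using hmono (Nat.zero_le n)

end Rollout

theorem IsCG.sub_eq_sub {n : ℕ} {St : Type*} {A : Fin n → Type*} {Gc : SimpleGraph (Fin n)}
    {Q : St → (∀ i, A i) → ℝ} (hQ : IsCG Gc Q) {L H : Set (Fin n)}
    (hLH : ∀ u v, u < v → Gc.Adj u v → (u ∈ L ∧ v ∈ L) ∨ (u ∈ H ∧ v ∈ H))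
    (s : St) {x x' z z' : ∀ i, A i} (hxx' : ∀ j ∈ L, x j = x' j)
    (hzz' : ∀ j ∈ L, z j = z' j) (hxz : ∀ j ∈ H, x j = z j)
    (hxz' : ∀ j ∈ H, x' j = z' j) :
    Q s x - Q s x' = Q s z - Q s z' := by
  obtain ⟨q, hq0, hq⟩ := hQ
  simp only [hq, ← Finset.sum_sub_distrib]
  refine Finset.sum_congr rfl fun u _ => Finset.sum_congr rfl fun v _ => ?_
  by_cases huv : u < v ∧ Gc.Adj u v
  · rcases hLH u v huv.1 huv.2 with ⟨hu, hv⟩ | ⟨hu, hv⟩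
    · rw [hxx' u hu, hxx' v hv, hzz' u hu, hzz' v hv, sub_self, sub_self]
    · rw [hxz u hu, hxz v hv, hxz' u hu, hxz' v hv]
  · simp [hq0 u v huv]

/-- `N_d(k) = N_c(k^{[+]})` for every agent `k`. -/
def ParentsAreSuffixNeighbors {n : ℕ} (Gc : SimpleGraph (Fin n)) (Ed : Fin n → Fin n → Prop) :
    Prop :=
  ∀ k, {j | Ed j k} = ncSet Gc {j | k ≤ j}

namespace ParentsAreSuffixNeighbors

variable {n : ℕ} {Gc : SimpleGraph (Fin n)} {Ed : Fin n → Fin n → Prop}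

theorem ed_iff (hNd : ParentsAreSuffixNeighbors Gc Ed) {i j : Fin n} :
    Ed j i ↔ (∃ u, i ≤ u ∧ Gc.Adj u j) ∧ ¬ i ≤ j := by
  simpa [ncSet, SimpleGraph.mem_neighborSet] using Set.ext_iff.mp (hNd i) j

theorem ed_of_adj (hNd : ParentsAreSuffixNeighbors Gc Ed) {i u v : Fin n}
    (hu : u < i) (hv : i ≤ v) (huv : Gc.Adj u v) : Ed u i :=
  hNd.ed_iff.2 ⟨⟨v, hv, huv.symm⟩, not_le.2 hu⟩

theorem ed_or_le (hNd : ParentsAreSuffixNeighbors Gc Ed) {i p m : Fin n}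
    (hp : i ≤ p) (hmp : Ed m p) : Ed m i ∨ i ≤ m := by
  refine or_iff_not_imp_right.2 fun hm => ?_
  obtain ⟨⟨u, hpu, hum⟩, -⟩ := hNd.ed_iff.1 hmp
  exact hNd.ed_iff.2 ⟨⟨u, hp.trans hpu, hum⟩, hm⟩

end ParentsAreSuffixNeighbors

section ClampedRollout

variable {n : ℕ} {St : Type*} {A : Fin n → Type*} [∀ i, Nonempty (A i)]
  {Ed : Fin n → Fin n → Prop} [DecidableRel Ed] {hEd : ∀ i j : Fin n, Ed j i → j < i}

theorem clampedAct_eq_of_lt (μ : Policy Ed St A) (i : Fin n)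
    (c : (j : {j : Fin n // Ed j i}) → A j.1) (b b' : A i) (s : St) {j : Fin n} (hj : j < i) :
    clampedAct Ed hEd μ i c b s j = clampedAct Ed hEd μ i c b' s j := by
  refine indAct_eqOn (S := {j | j < i}) (fun p hp _ m hm => (hEd p m hm).trans hp) ?_
    (fun _ _ _ => rfl) j hj
  intro p hp hpF
  have hpi : Ed p i := (mem_parentsAndSelf.1 hpF).resolve_right (ne_of_lt hp)
  rw [cvec_of_ed hpi, cvec_of_ed hpi]

theorem clampedAct_eq_of_ed_or_le {Gc : SimpleGraph (Fin n)}
    (hNd : ParentsAreSuffixNeighbors Gc Ed) {μ ν : Policy Ed St A} {i : Fin n}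
    (hμν : ∀ j, i < j → μ j = ν j) (c : (j : {j : Fin n // Ed j i}) → A j.1) (b : A i)
    (s : St) {j : Fin n} (hj : Ed j i ∨ i ≤ j) :
    clampedAct Ed hEd μ i c b s j = clampedAct Ed hEd ν i c b s j := by
  have hlt : ∀ p, Ed p i ∨ i ≤ p → p ∉ parentsAndSelf Ed i → i < p := fun p hp hpF => by
    rw [mem_parentsAndSelf, not_or] at hpF
    exact lt_of_le_of_ne (hp.resolve_left hpF.1) (Ne.symm hpF.2)
  exact indAct_eqOn (S := {j | Ed j i ∨ i ≤ j})
    (fun p hp hpF m hm => hNd.ed_or_le (hlt p hp hpF).le hm)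
    (fun _ _ _ => rfl) (fun p hp hpF => hμν p (hlt p hp hpF)) j hj

/-- Every edge of `Gc` lies below `i` or inside `N_d(i) ∪ i^{[+]}`: on the first part the two
clamped rollouts of one policy agree, on the second the clamped rollouts of `μ` and `ν`. -/
theorem IsCG.clampedAct_sub_eq {Gc : SimpleGraph (Fin n)}
    (hNd : ParentsAreSuffixNeighbors Gc Ed) {Q : St → (∀ i, A i) → ℝ}
    (hQ : IsCG Gc Q) {μ ν : Policy Ed St A} {i : Fin n} (hμν : ∀ j, i < j → μ j = ν j)
    (c : (j : {j : Fin n // Ed j i}) → A j.1) (b b' : A i) (s : St) :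
    Q s (clampedAct Ed hEd μ i c b s) - Q s (clampedAct Ed hEd μ i c b' s) =
      Q s (clampedAct Ed hEd ν i c b s) - Q s (clampedAct Ed hEd ν i c b' s) := by
  refine hQ.sub_eq_sub (L := {j | j < i}) (H := {j | Ed j i ∨ i ≤ j}) ?_ s
    (fun j hj => clampedAct_eq_of_lt μ i c b b' s hj)
    (fun j hj => clampedAct_eq_of_lt ν i c b b' s hj)
    (fun j hj => clampedAct_eq_of_ed_or_le hNd hμν c b s hj)
    (fun j hj => clampedAct_eq_of_ed_or_le hNd hμν c b' s hj)
  intro u v huv hadj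
  by_cases hvi : v < i
  · exact Or.inl ⟨huv.trans hvi, hvi⟩
  · refine Or.inr ⟨?_, Or.inr (not_lt.1 hvi)⟩
    by_cases hui : u < i
    · exact Or.inl (hNd.ed_of_adj hui (not_lt.1 hvi) hadj)
    · exact Or.inr (not_lt.1 hui)

end ClampedRollout

/-- Strong person-by-person optimality: the condition satisfied by a fixed point of the
improvement step of AD-MPI. -/
def IsPersonByPersonOptimal {n : ℕ} {St : Type*} {A : Fin n → Type*} [∀ i, Nonempty (A i)]
    (Ed : Fin n → Fin n → Prop) [DecidableRel Ed] (hEd : ∀ i j : Fin n, Ed j i → j < i)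
    (Q : St → (∀ i, A i) → ℝ) (π : Policy Ed St A) : Prop :=
  ∀ i s c b, Q s (clampedAct Ed hEd π i c b s) ≤ Q s (clampedAct Ed hEd π i c (π i s c) s)

theorem IsPersonByPersonOptimal.le_indAct {n : ℕ} {St : Type*} {A : Fin n → Type*}
    [∀ i, Nonempty (A i)] {Ed : Fin n → Fin n → Prop} [DecidableRel Ed]
    {hEd : ∀ i j : Fin n, Ed j i → j < i} {Gc : SimpleGraph (Fin n)}
    (hNd : ParentsAreSuffixNeighbors Gc Ed) {Q : St → (∀ i, A i) → ℝ}
    (hQ : IsCG Gc Q) {π : Policy Ed St A} (hπ : IsPersonByPersonOptimal Ed hEd Q π) (s : St)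
    (a a' : ∀ i, A i) :
    Q s a ≤ Q s (indAct Ed hEd π ∅ a' s) := by
  -- `Q` can only decrease as the agents switch, one at a time, from `π` to the actions `a`
  have key := le_indAct_of_forall_clampedAct_le (hEd := hEd) (fun x => -Q s x) π
    (fun j _ _ => a j) a' s fun i => ?_
  · rw [indAct_const] at key
    exact neg_le_neg_iff.1 key
  · set ρ := spliceBelow i (fun j _ _ => a j) π
    have hρ : ∀ j, i < j → ρ j = π j := fun j hj => by
      simp [ρ, spliceBelow, not_lt.2 hj.le]
    set c := fun p : {p // Ed p i} => indAct Ed hEd ρ ∅ a' s p.1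
    have htransfer := hQ.clampedAct_sub_eq (hEd := hEd) hNd hρ c (a i) (π i s c) s
    have hopt := hπ i s c (a i)
    simp only [neg_le_neg_iff]
    linarith

theorem Monotone.exists_forall_ge_eq_of_finite_range {α : Type*} [PartialOrder α] {f : ℕ → α}
    (hf : Monotone f) (hfin : (Set.range f).Finite) : ∃ K, ∀ k ≥ K, f k = f K := by
  obtain ⟨_, ⟨K, rfl⟩, hK⟩ := hfin.exists_maximal (Set.range_nonempty f)
  exact ⟨K, fun k hk => (hK ⟨k, rfl⟩ (hf hk)).antisymm (hf hk)⟩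

section Discounted

variable {n : ℕ} {St : Type*} [Fintype St] {A : Fin n → Type*}
  {P : St → (∀ i, A i) → St → ℝ} {r : St → (∀ i, A i) → ℝ} {γ : ℝ}

theorem QV_sub_QV (V W : St → ℝ) (s : St) (a : ∀ i, A i) :
    QV P r γ W s a - QV P r γ V s a = γ * ∑ s', P s a s' * (W s' - V s') := by
  simp only [QV, mul_sub, Finset.sum_sub_distrib]
  ring

theorem le_of_forall_exists_le_QV (hP0 : ∀ s a s', 0 ≤ P s a s')
    (hP1 : ∀ s a, ∑ s', P s a s' = 1) (hγ0 : 0 ≤ γ) (hγ1 : γ < 1) {V W : St → ℝ}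
    (h : ∀ s, ∃ a, V s ≤ QV P r γ V s a ∧ QV P r γ W s a ≤ W s) : V ≤ W := by
  intro s
  have : Nonempty St := ⟨s⟩
  obtain ⟨s₀, hs₀⟩ := Finite.exists_min fun s => W s - V s
  obtain ⟨a, hVa, hWa⟩ := h s₀
  have hmean : W s₀ - V s₀ ≤ ∑ s', P s₀ a s' * (W s' - V s') := calc
    W s₀ - V s₀ = ∑ s', P s₀ a s' * (W s₀ - V s₀) := by
      rw [← Finset.sum_mul, hP1, one_mul]
    _ ≤ _ := Finset.sum_le_sum fun s' _ => mul_le_mul_of_nonneg_left (hs₀ s') (hP0 _ _ _)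
  have hcontract : γ * (W s₀ - V s₀) ≤ W s₀ - V s₀ := calc
    γ * (W s₀ - V s₀) ≤ γ * ∑ s', P s₀ a s' * (W s' - V s') :=
      mul_le_mul_of_nonneg_left hmean hγ0
    _ = QV P r γ W s₀ a - QV P r γ V s₀ a := (QV_sub_QV V W s₀ a).symm
    _ ≤ W s₀ - V s₀ := by linarith
  have hmin : 0 ≤ W s₀ - V s₀ := by nlinarith
  linarith [hs₀ s]

theorem eq_of_forall_eq_QV (hP0 : ∀ s a s', 0 ≤ P s a s') (hP1 : ∀ s a, ∑ s', P s a s' = 1)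
    (hγ0 : 0 ≤ γ) (hγ1 : γ < 1) {V W : St → ℝ} {α : St → ∀ i, A i}
    (hV : ∀ s, V s = QV P r γ V s (α s)) (hW : ∀ s, W s = QV P r γ W s (α s)) : V = W :=
  le_antisymm
    (le_of_forall_exists_le_QV hP0 hP1 hγ0 hγ1 fun s => ⟨α s, (hV s).le, (hW s).ge⟩)
    (le_of_forall_exists_le_QV hP0 hP1 hγ0 hγ1 fun s => ⟨α s, (hW s).le, (hV s).ge⟩)

theorem eq_of_forall_QV_le [∀ i, Fintype (A i)] [∀ i, Nonempty (A i)]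
    (hP0 : ∀ s a s', 0 ≤ P s a s') (hP1 : ∀ s a, ∑ s', P s a s' = 1) (hγ0 : 0 ≤ γ)
    (hγ1 : γ < 1) {V Vstar : St → ℝ} {α : St → ∀ i, A i}
    (hV : ∀ s, V s = QV P r γ V s (α s))
    (hα : ∀ s a, QV P r γ V s a ≤ QV P r γ V s (α s))
    (hVstar : ∀ s, Vstar s = ⨆ a : ∀ i, A i, QV P r γ Vstar s a) : Vstar = V := by
  refine le_antisymm (le_of_forall_exists_le_QV (r := r) hP0 hP1 hγ0 hγ1 fun s => ?_)
    (le_of_forall_exists_le_QV (r := r) hP0 hP1 hγ0 hγ1 fun s => ?_)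
  · obtain ⟨a, ha⟩ := Finite.exists_max (QV P r γ Vstar s)
    exact ⟨a, (hVstar s).trans_le (ciSup_le ha), (hα s a).trans (hV s).ge⟩
  · exact ⟨α s, (hV s).le,
      (le_ciSup (Set.finite_range _).bddAbove (α s)).trans (hVstar s).ge⟩

theorem isCG_QV_of_forall_eq_QV {Gc : SimpleGraph (Fin n)} [∀ i, Fintype (A i)]
    (hCGall : ∀ (p : St → (∀ i, A i) → ℝ) (V : St → ℝ),
        (∀ s, (∀ a, 0 ≤ p s a) ∧ ∑ a : ∀ i, A i, p s a = 1) →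
        (∀ s, V s = ∑ a : ∀ i, A i, p s a * QV P r γ V s a) →
        IsCG Gc (QV P r γ V))
    {V : St → ℝ} {α : St → ∀ i, A i} (hV : ∀ s, V s = QV P r γ V s (α s)) :
    IsCG Gc (QV P r γ V) := by
  classical
  refine hCGall (fun s a => if a = α s then 1 else 0) V
    (fun s => ⟨fun a => by positivity, by simp⟩) fun s => ?_
  simpa only [ite_mul, one_mul, zero_mul, Finset.sum_ite_eq', Finset.mem_univ, if_true]
    using hV s

end Discounted

namespace ADMPI

variable {n : ℕ} {St : Type*} [Fintype St] {A : Fin n → Type*} [∀ i, Fintype (A i)]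
  [∀ i, Nonempty (A i)] {P : St → (∀ i, A i) → St → ℝ} {r : St → (∀ i, A i) → ℝ}
  {γ : ℝ} {Ed : Fin n → Fin n → Prop} [DecidableRel Ed]
  {hEd : ∀ i j : Fin n, Ed j i → j < i}
  {πseq : ℕ → Policy Ed St A} {Vseq : ℕ → St → ℝ}

theorem le_QV_succ (hAD : ADMPI P r γ Ed hEd πseq Vseq) (k : ℕ) (a' : ∀ i, A i) (s : St) :
    Vseq k s ≤ QV P r γ (Vseq k) s (indAct Ed hEd (πseq (k + 1)) ∅ a' s) := by
  rw [hAD.1 k s a']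
  exact le_indAct_of_forall_clampedAct_le _ _ _ a' s fun i => hAD.2 k i s _ _

theorem monotone_value (hP0 : ∀ s a s', 0 ≤ P s a s') (hP1 : ∀ s a, ∑ s', P s a s' = 1)
    (hγ0 : 0 ≤ γ) (hγ1 : γ < 1) (hAD : ADMPI P r γ Ed hEd πseq Vseq) : Monotone Vseq := by
  let a' : ∀ i, A i := Classical.arbitrary _
  refine monotone_nat_of_le_succ fun k =>
    le_of_forall_exists_le_QV (r := r) hP0 hP1 hγ0 hγ1 fun s => ?_
  exact ⟨_, hAD.le_QV_succ k a' s, (hAD.1 (k + 1) s a').ge⟩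

theorem value_eq_of_policy_eq (hP0 : ∀ s a s', 0 ≤ P s a s')
    (hP1 : ∀ s a, ∑ s', P s a s' = 1) (hγ0 : 0 ≤ γ) (hγ1 : γ < 1)
    (hAD : ADMPI P r γ Ed hEd πseq Vseq) {k k' : ℕ} (h : πseq k = πseq k') :
    Vseq k = Vseq k' := by
  let a' : ∀ i, A i := Classical.arbitrary _
  refine eq_of_forall_eq_QV hP0 hP1 hγ0 hγ1 (fun s => hAD.1 k s a') fun s => ?_
  rw [h]
  exact hAD.1 k' s a'

/-- The values increase and there are only finitely many policies. -/
theorem exists_value_eventually_eq (hP0 : ∀ s a s', 0 ≤ P s a s')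
    (hP1 : ∀ s a, ∑ s', P s a s' = 1) (hγ0 : 0 ≤ γ) (hγ1 : γ < 1)
    (hAD : ADMPI P r γ Ed hEd πseq Vseq) : ∃ K, ∀ k ≥ K, Vseq k = Vseq K := by
  refine (hAD.monotone_value hP0 hP1 hγ0 hγ1).exists_forall_ge_eq_of_finite_range
    ((Set.finite_range (Vseq ∘ Function.invFun πseq)).subset ?_)
  rintro _ ⟨k, rfl⟩
  exact ⟨πseq k, hAD.value_eq_of_policy_eq hP0 hP1 hγ0 hγ1 (Function.invFun_eq ⟨k, rfl⟩)⟩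

/-- By `IsCG.clampedAct_sub_eq` both updates maximize the same objective, whose maximizer is
unique. -/
theorem policy_succ_eq {Gc : SimpleGraph (Fin n)}
    (hNd : ParentsAreSuffixNeighbors Gc Ed) (hAD : ADMPI P r γ Ed hEd πseq Vseq)
    (hSingle : SingletonArgmax P r γ Ed hEd πseq Vseq) {a b : ℕ}
    (hCG : IsCG Gc (QV P r γ (Vseq b))) (hb : 1 ≤ b) (hV : Vseq a = Vseq b) {i : Fin n}
    (hhigh : ∀ j, i < j → πseq a j = πseq b j) : πseq (a + 1) i = πseq (b + 1) i := by
  funext s c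
  set μ := spliceBelow i (πseq (b + 1)) (πseq b)
  set ν := spliceBelow i (πseq (a + 1)) (πseq a)
  have hμν : ∀ j, i < j → μ j = ν j := fun j hj => by
    simp [μ, ν, spliceBelow, not_lt.2 hj.le, hhigh j hj]
  refine hSingle b hb i s c _ _ (fun b' => ?_) (hAD.2 b i s c)
  have hmax : QV P r γ (Vseq b) s (clampedAct Ed hEd ν i c b' s) ≤
      QV P r γ (Vseq b) s (clampedAct Ed hEd ν i c (πseq (a + 1) i s c) s) :=
    hV ▸ hAD.2 a i s c b'
  have htransfer := hCG.clampedAct_sub_eq (hEd := hEd) hNd hμν c b' (πseq (a + 1) i s c) s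
  change QV P r γ (Vseq b) s (clampedAct Ed hEd μ i c b' s) ≤
    QV P r γ (Vseq b) s (clampedAct Ed hEd μ i c (πseq (a + 1) i s c) s)
  linarith

theorem exists_policy_eventually_eq {Gc : SimpleGraph (Fin n)} (hP0 : ∀ s a s', 0 ≤ P s a s')
    (hP1 : ∀ s a, ∑ s', P s a s' = 1) (hγ0 : 0 ≤ γ) (hγ1 : γ < 1)
    (hNd : ParentsAreSuffixNeighbors Gc Ed) (hCG : ∀ k, IsCG Gc (QV P r γ (Vseq k)))
    (hAD : ADMPI P r γ Ed hEd πseq Vseq) (hSingle : SingletonArgmax P r γ Ed hEd πseq Vseq) :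
    ∃ K, ∀ k ≥ K, πseq k = πseq K := by
  obtain ⟨K₀, hK₀⟩ := hAD.exists_value_eventually_eq hP0 hP1 hγ0 hγ1
  suffices h : ∀ m ≤ n, ∃ K, ∀ k ≥ K, ∀ j : Fin n, m ≤ j → πseq k j = πseq K j by
    obtain ⟨K, hK⟩ := h 0 n.zero_le
    exact ⟨K, fun k hk => funext fun j => hK k hk j j.val.zero_le⟩
  intro m hm
  refine Nat.decreasingInduction (fun m hm ih => ?_)
    ⟨0, fun k _ j hj => absurd j.isLt (not_lt.2 hj)⟩ hm
  · obtain ⟨K, hK⟩ := ih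
    set b := max K K₀ + 1
    refine ⟨b + 1, fun k hk j hj => ?_⟩
    obtain ⟨a, rfl⟩ : ∃ a, k = a + 1 := ⟨k - 1, by omega⟩
    rcases hj.lt_or_eq with hj | hj
    · rw [hK (a + 1) (by omega) j hj, hK (b + 1) (by omega) j hj]
    · obtain rfl : j = ⟨m, hm⟩ := Fin.ext hj.symm
      refine hAD.policy_succ_eq hNd hSingle (hCG b) (by omega) ?_ fun j' hj' => ?_
      · rw [hK₀ a (by omega), hK₀ b (by omega)]
      · rw [hK a (by omega) j' hj', hK b (by omega) j' hj']

end ADMPI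

/-- convergence theorem: suppose `G_c` is a CG of `Q^{V^π}` for every
(stochastic) joint policy `π` of the finite Markov game, and the singleton-argmax
assumption holds. Let `(πseq, Vseq)` be an execution of Algorithm AD-MPI associated
with an ADG (edge relation `Ed`). If `N_d(i) = N_c(i^{[+]})` for every `i`, then the
policy sequence converges in finitely many terms to a globally optimal policy `π°`,
i.e. `V^{π°} = V^*` (encoded as: `V^*` is the fixed point of `T_{π°}`). -/
theorem stmt14 {n : ℕ} {St : Type*} [Fintype St] {A : Fin n → Type*}
    [∀ i, Fintype (A i)] [∀ i, Nonempty (A i)]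
    (P : St → (∀ i, A i) → St → ℝ) (r : St → (∀ i, A i) → ℝ) (γ : ℝ)
    (hP0 : ∀ s a s', 0 ≤ P s a s') (hP1 : ∀ s a, ∑ s', P s a s' = 1)
    (hγ0 : 0 ≤ γ) (hγ1 : γ < 1)
    (Gc : SimpleGraph (Fin n))
    (hCGall : ∀ (p : St → (∀ i, A i) → ℝ) (V : St → ℝ),
        (∀ s, (∀ a, 0 ≤ p s a) ∧ ∑ a : ∀ i, A i, p s a = 1) →
        (∀ s, V s = ∑ a : ∀ i, A i, p s a * QV P r γ V s a) →
        IsCG Gc (QV P r γ V))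
    (Ed : Fin n → Fin n → Prop) [DecidableRel Ed]
    (hEd : ∀ i j : Fin n, Ed j i → j < i)
    (πseq : ℕ → (i : Fin n) → St → ((j : {j : Fin n // Ed j i}) → A j.1) → A i)
    (Vseq : ℕ → St → ℝ)
    (hADMPI : ADMPI P r γ Ed hEd πseq Vseq)
    (hSingle : SingletonArgmax P r γ Ed hEd πseq Vseq)
    (hNd : ∀ k : Fin n, {j : Fin n | Ed j k} = ncSet Gc {j : Fin n | k ≤ j})
    (Vstar : St → ℝ)
    (hVstar : ∀ s, Vstar s = ⨆ a : ∀ i, A i, QV P r γ Vstar s a) :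
    ∃ (K : ℕ)
      (πcirc : (i : Fin n) → St → ((j : {j : Fin n // Ed j i}) → A j.1) → A i),
      (∀ k ≥ K, ∀ i : Fin n, πseq k i = πcirc i) ∧
      (∀ (s : St) (a' : ∀ i, A i),
        Vstar s = QV P r γ Vstar s (indAct Ed hEd πcirc ∅ a' s)) := by
  let a₀ : ∀ i, A i := Classical.arbitrary _
  have hCG (k : ℕ) : IsCG Gc (QV P r γ (Vseq k)) :=
    isCG_QV_of_forall_eq_QV hCGall fun s => hADMPI.1 k s a₀
  obtain ⟨K, hK⟩ := hADMPI.exists_policy_eventually_eq hP0 hP1 hγ0 hγ1 hNd hCG hSingle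
  have hπ : IsPersonByPersonOptimal Ed hEd (QV P r γ (Vseq K)) (πseq K) := fun i s c b => by
    have h := hADMPI.2 K i s c b
    simp only [hK (K + 1) K.le_succ, ite_self] at h
    exact h
  have hVstar_eq : Vstar = Vseq K :=
    eq_of_forall_QV_le hP0 hP1 hγ0 hγ1 (fun s => hADMPI.1 K s a₀)
      (fun s a => hπ.le_indAct hNd (hCG K) s a a₀) hVstar
  refine ⟨K, πseq K, fun k hk i => congrFun (hK k hk) i, fun s a' => ?_⟩
  rw [hVstar_eq]
  exact hADMPI.1 K s a'
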